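/- For any real a ≥ 2 and positive integer n, the improper integral ∫_a^∞ (1 - F(x)^{n+1} - (1-F(x))^{n+1}) dx is at most ((n+1)/√(2π)) · exp(-a), where F is the standard normal CDF. -/

import Mathlib

open MeasureTheory Real

/-- The cumulative distribution function of the standard normal distribution. -/
noncomputable def stdNormalCDF (x : ℝ) : ℝ :=
  (Real.sqrt (2 * Real.pi))⁻¹ * ∫ t in Set.Iic x, Real.exp (-t ^ 2 / 2)

/-!
For `x ≥ 2` the Gaussian density is dominated by `e^{-x}`, so the normal tail satisfies
`1 - F(x) ≤ e^{-x} / √(2π)`. By Bernoulli's inequality the integrand is at most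
`1 - F(x)^{n+1} ≤ (n+1)(1 - F(x))`, and integrating `e^{-x}` over `(a, ∞)` gives `e^{-a}`.
-/

section Bernoulli

variable {R : Type*} [CommRing R] [LinearOrder R] [IsStrictOrderedRing R] {p : R}

lemma one_sub_pow_sub_one_sub_pow_nonneg (h0 : 0 ≤ p) (h1 : p ≤ 1) {m : ℕ} (hm : m ≠ 0) :
    0 ≤ 1 - p ^ m - (1 - p) ^ m := by
  have hp : p ^ m ≤ p := pow_le_of_le_one h0 h1 hm
  have hq : (1 - p) ^ m ≤ 1 - p := pow_le_of_le_one (sub_nonneg.2 h1) (by simpa using h0) hm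
  linarith

lemma one_sub_pow_sub_one_sub_pow_le (h0 : -1 ≤ p) (h1 : p ≤ 1) (m : ℕ) :
    1 - p ^ m - (1 - p) ^ m ≤ m * (1 - p) := by
  have hbern : 1 + m * (p - 1) ≤ p ^ m := one_add_mul_sub_le_pow h0 m
  have hq : 0 ≤ (1 - p) ^ m := pow_nonneg (sub_nonneg.2 h1) m
  linarith

end Bernoulli

lemma integrable_exp_neg_sq_div_two : Integrable fun t : ℝ => exp (-t ^ 2 / 2) := by
  convert integrable_exp_neg_mul_sq (b := (1 / 2 : ℝ)) (by norm_num) using 4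
  ring

lemma integral_exp_neg_sq_div_two : ∫ t : ℝ, exp (-t ^ 2 / 2) = sqrt (2 * π) := by
  convert integral_gaussian (1 / 2 : ℝ) using 4
  · ring
  · field_simp

lemma integral_Ioi_exp_neg_sq_div_two_le {x : ℝ} (hx : 2 ≤ x) :
    ∫ t in Set.Ioi x, exp (-t ^ 2 / 2) ≤ exp (-x) := by
  calc ∫ t in Set.Ioi x, exp (-t ^ 2 / 2)
      ≤ ∫ t in Set.Ioi x, exp (-t) := by
        refine setIntegral_mono_on integrable_exp_neg_sq_div_two.integrableOn
          (integrableOn_exp_neg_Ioi x) measurableSet_Ioi fun t ht => ?_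
        have ht : 2 ≤ t := hx.trans (le_of_lt ht)
        exact exp_le_exp.2 (by nlinarith)
    _ = exp (-x) := integral_exp_neg_Ioi x

lemma stdNormalCDF_nonneg (x : ℝ) : 0 ≤ stdNormalCDF x :=
  mul_nonneg (by positivity) (integral_nonneg fun t => (exp_pos _).le)

lemma one_sub_stdNormalCDF (x : ℝ) :
    1 - stdNormalCDF x = (sqrt (2 * π))⁻¹ * ∫ t in Set.Ioi x, exp (-t ^ 2 / 2) := by
  have hsplit := intervalIntegral.integral_Iic_add_Ioi (b := x)
    integrable_exp_neg_sq_div_two.integrableOn integrable_exp_neg_sq_div_two.integrableOn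
  rw [integral_exp_neg_sq_div_two] at hsplit
  have hne : sqrt (2 * π) ≠ 0 := (sqrt_pos.2 (by positivity)).ne'
  rw [stdNormalCDF, ← inv_mul_cancel₀ hne, ← hsplit]
  ring

lemma stdNormalCDF_le_one (x : ℝ) : stdNormalCDF x ≤ 1 := by
  rw [← sub_nonneg, one_sub_stdNormalCDF]
  exact mul_nonneg (by positivity) (integral_nonneg fun t => (exp_pos _).le)

lemma one_sub_stdNormalCDF_le {x : ℝ} (hx : 2 ≤ x) :
    1 - stdNormalCDF x ≤ (sqrt (2 * π))⁻¹ * exp (-x) := by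
  rw [one_sub_stdNormalCDF]
  exact mul_le_mul_of_nonneg_left (integral_Ioi_exp_neg_sq_div_two_le hx) (by positivity)

theorem integral_tail_bound_general (n : ℕ) (a : ℝ) (ha : 2 ≤ a) :
    ∫ x in Set.Ioi a, (1 - (stdNormalCDF x) ^ (n + 1) - (1 - stdNormalCDF x) ^ (n + 1)) ≤
      ((n + 1 : ℝ) / Real.sqrt (2 * Real.pi)) * Real.exp (-a) := by
  set c : ℝ := (n + 1 : ℝ) / sqrt (2 * π)
  have hpointwise : ∀ x ∈ Set.Ioi a,
      1 - stdNormalCDF x ^ (n + 1) - (1 - stdNormalCDF x) ^ (n + 1) ≤ c * exp (-x) := by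
    intro x hx
    calc _ ≤ ((n + 1 : ℕ) : ℝ) * (1 - stdNormalCDF x) :=
          one_sub_pow_sub_one_sub_pow_le (by linarith [stdNormalCDF_nonneg x])
            (stdNormalCDF_le_one x) (n + 1)
      _ ≤ (n + 1 : ℝ) * ((sqrt (2 * π))⁻¹ * exp (-x)) := by
          push_cast
          exact mul_le_mul_of_nonneg_left (one_sub_stdNormalCDF_le (ha.trans hx.le))
            (by positivity)
      _ = c * exp (-x) := by ring
  calc _ ≤ ∫ x in Set.Ioi a, c * exp (-x) := by
        refine integral_mono_of_nonneg ?_ ((integrableOn_exp_neg_Ioi a).const_mul c)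
          ((ae_restrict_iff' measurableSet_Ioi).2 (.of_forall hpointwise))
        exact .of_forall fun x => one_sub_pow_sub_one_sub_pow_nonneg (stdNormalCDF_nonneg x)
          (stdNormalCDF_le_one x) n.succ_ne_zero
    _ = c * exp (-a) := by rw [integral_const_mul, integral_exp_neg_Ioi]

theorem integral_tail_bound (n : ℕ) (hn : 0 < n) (a : ℝ) (ha : 2 ≤ a) :
    ∫ x in Set.Ioi a, (1 - (stdNormalCDF x) ^ (n + 1) - (1 - stdNormalCDF x) ^ (n + 1)) ≤
      ((n + 1 : ℝ) / Real.sqrt (2 * Real.pi)) * Real.exp (-a) :=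
  integral_tail_bound_general n a ha
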